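/- Any two countable atomless Boolean algebras are isomorphic. -/
import Mathlib

noncomputable section

/-- The "cell" of a finite set `f` with labels `g` determined by sign set `s`. -/
def BACell {ι C : Type*} [DecidableEq ι] [BooleanAlgebra C] (f : Finset ι) (g : ι → C)
    (s : Finset ι) : C :=
  f.inf fun p => if p ∈ s then g p else (g p)ᶜ

section CellLemmas

variable {ι C : Type*} [DecidableEq ι] [BooleanAlgebra C] {f : Finset ι} {g : ι → C}
  {s t : Finset ι}

theorem BACell_le_of_mem {p : ι} (hp : p ∈ f) (hs : p ∈ s) : BACell f g s ≤ g p := by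
  have := Finset.inf_le (f := fun p => if p ∈ s then g p else (g p)ᶜ) hp
  simpa [BACell, hs] using this

theorem BACell_le_of_not_mem {p : ι} (hp : p ∈ f) (hs : p ∉ s) : BACell f g s ≤ (g p)ᶜ := by
  have := Finset.inf_le (f := fun p => if p ∈ s then g p else (g p)ᶜ) hp
  simpa [BACell, hs] using this

theorem BACell_congr (h : ∀ p ∈ f, p ∈ s ↔ p ∈ t) : BACell f g s = BACell f g t := by
  refine Finset.inf_congr rfl fun p hp => ?_
  by_cases hps : p ∈ s
  · simp [hps, (h p hp).mp hps]
  · have hpt : p ∉ t := fun h' => hps ((h p hp).mpr h')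
    simp [hps, hpt]

theorem BACell_inter : BACell f g s = BACell f g (s ∩ f) :=
  BACell_congr fun p hp => by simp [Finset.mem_inter, hp]

theorem BACell_disjoint (hs : s ⊆ f) (ht : t ⊆ f) (hst : s ≠ t) :
    BACell f g s ⊓ BACell f g t = ⊥ := by
  obtain ⟨p, hp⟩ : ∃ p, ¬(p ∈ s ↔ p ∈ t) := by
    by_contra h
    push_neg at h
    exact hst (Finset.ext fun p => h p)
  have hc : (p ∈ s ∧ p ∉ t) ∨ (p ∈ t ∧ p ∉ s) := by tauto
  rcases hc with ⟨h1, h2⟩ | ⟨h1, h2⟩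
  all_goals have hpf : p ∈ f := by first | exact hs h1 | exact ht h1
  · have l1 := BACell_le_of_mem (g := g) hpf h1
    have l2 := BACell_le_of_not_mem (g := g) hpf h2
    have : BACell f g s ⊓ BACell f g t ≤ g p ⊓ (g p)ᶜ := inf_le_inf l1 l2
    simpa using le_bot_iff.mp (by simpa using this)
  · have l1 := BACell_le_of_not_mem (g := g) hpf h2
    have l2 := BACell_le_of_mem (g := g) hpf h1
    have : BACell f g s ⊓ BACell f g t ≤ (g p)ᶜ ⊓ g p := inf_le_inf l1 l2
    simpa using le_bot_iff.mp (by simpa using this)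

theorem BACell_insert {p : ι} (hp : p ∉ f) :
    BACell (insert p f) g s = (if p ∈ s then g p else (g p)ᶜ) ⊓ BACell f g s := by
  simp [BACell, Finset.inf_insert]

/-- Any nonzero element meets some cell nontrivially. -/
theorem exists_BACell (g : ι → C) (f : Finset ι) {x : C} (hx : x ≠ ⊥) :
    ∃ s, s ⊆ f ∧ x ⊓ BACell f g s ≠ ⊥ := by
  induction f using Finset.induction_on with
  | empty => exact ⟨∅, Finset.Subset.refl _, by simpa [BACell] using hx⟩
  | @insert p f hp ih =>
    obtain ⟨s, hsf, hs⟩ := ih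
    have hsplit : x ⊓ BACell f g s ⊓ g p ≠ ⊥ ∨ x ⊓ BACell f g s ⊓ (g p)ᶜ ≠ ⊥ := by
      by_contra h
      push_neg at h
      apply hs
      have : x ⊓ BACell f g s = (x ⊓ BACell f g s ⊓ g p) ⊔ (x ⊓ BACell f g s ⊓ (g p)ᶜ) := by
        rw [← inf_sup_left, sup_compl_eq_top, inf_top_eq]
      rw [this, h.1, h.2, bot_sup_eq]
    rcases hsplit with h | h
    · refine ⟨insert p s, Finset.insert_subset_insert p hsf, ?_⟩
      have hcong : BACell f g (insert p s) = BACell f g s :=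
        BACell_congr fun q hq => by
          have : q ≠ p := fun hqp => hp (hqp ▸ hq)
          simp [Finset.mem_insert, this]
      rw [BACell_insert hp, if_pos (Finset.mem_insert_self p s), hcong]
      intro hbot
      apply h
      rw [← hbot]
      rw [inf_comm (g p) (BACell f g s), ← inf_assoc]
    · refine ⟨s, hsf.trans (Finset.subset_insert p f), ?_⟩
      have hps : p ∉ s := fun hin => hp (hsf hin)
      rw [BACell_insert hp, if_neg hps]
      intro hbot
      apply h
      rw [← hbot]
      rw [inf_comm ((g p)ᶜ) (BACell f g s), ← inf_assoc]

end CellLemmas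

section Split

variable {C : Type*} [BooleanAlgebra C]

open Classical in
/-- Pick a proper nonzero piece of `d` (exists when `d ≠ ⊥` and `C` is atomless). -/
noncomputable def BASplit (d : C) : C :=
  if h : ∃ r : C, r ≠ ⊥ ∧ r < d then h.choose else ⊥

theorem BASplit_le (d : C) : BASplit d ≤ d := by
  unfold BASplit
  split
  · next h => exact le_of_lt h.choose_spec.2
  · exact bot_le

theorem BASplit_spec (hC : ∀ c : C, ¬IsAtom c) {d : C} (hd : d ≠ ⊥) :
    BASplit d ≠ ⊥ ∧ BASplit d < d := by
  have hex : ∃ r : C, r ≠ ⊥ ∧ r < d := by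
    have := hC d
    rw [IsAtom] at this
    push_neg at this
    obtain ⟨r, hr1, hr2⟩ := this hd
    exact ⟨r, hr2, hr1⟩
  unfold BASplit
  rw [dif_pos hex]
  exact ⟨hex.choose_spec.1, hex.choose_spec.2⟩

end Split

section Good

variable {A B : Type*} [BooleanAlgebra A] [BooleanAlgebra B] [DecidableEq (A × B)]

/-- `f` is a partial isomorphism: corresponding cells vanish together. -/
def BAGood (f : Finset (A × B)) : Prop :=
  ∀ s : Finset (A × B), (BACell f Prod.fst s = ⊥ ↔ BACell f Prod.snd s = ⊥)

theorem BAGood_empty [Nontrivial A] [Nontrivial B] :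
    BAGood (∅ : Finset (A × B)) := fun s => by
  rw [BACell, BACell, Finset.inf_empty, Finset.inf_empty]
  exact iff_of_false top_ne_bot top_ne_bot


/-- Partial isomorphisms preserve order, left to right. -/
theorem BAGood.le_snd {f : Finset (A × B)} (hf : BAGood f) {a a' : A} {b b' : B}
    (h1 : (a, b) ∈ f) (h2 : (a', b') ∈ f) (hle : a ≤ a') : b ≤ b' := by
  by_contra hb
  have hx : b ⊓ b'ᶜ ≠ ⊥ := by
    intro h
    exact hb (by rwa [← sdiff_eq, sdiff_eq_bot_iff] at h)
  obtain ⟨s, _, hs⟩ := exists_BACell Prod.snd f hx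
  have hcell : BACell f Prod.snd s ≠ ⊥ := fun h => hs (by rw [h, inf_bot_eq])
  have hmem1 : (a, b) ∈ s := by
    by_contra hns
    have l1 : BACell f Prod.snd s ≤ bᶜ := BACell_le_of_not_mem h1 hns
    have : b ⊓ b'ᶜ ⊓ BACell f Prod.snd s ≤ b ⊓ bᶜ :=
      inf_le_inf (inf_le_left.trans le_rfl) l1
    exact hs (le_bot_iff.mp (by simpa using this))
  have hmem2 : (a', b') ∉ s := by
    intro hns
    have l1 : BACell f Prod.snd s ≤ b' := BACell_le_of_mem h2 hns
    have : b ⊓ b'ᶜ ⊓ BACell f Prod.snd s ≤ b'ᶜ ⊓ b' :=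
      inf_le_inf inf_le_right l1
    exact hs (le_bot_iff.mp (by simpa using this))
  have hA : BACell f Prod.fst s ≠ ⊥ := fun h => hcell ((hf s).mp h)
  apply hA
  have l1 : BACell f Prod.fst s ≤ a := BACell_le_of_mem h1 hmem1
  have l2 : BACell f Prod.fst s ≤ a'ᶜ := BACell_le_of_not_mem h2 hmem2
  have : BACell f Prod.fst s ≤ a' ⊓ a'ᶜ := le_inf (l1.trans hle) l2
  exact le_bot_iff.mp (by simpa using this)

/-- Partial isomorphisms preserve order, right to left. -/
theorem BAGood.le_fst {f : Finset (A × B)} (hf : BAGood f) {a a' : A} {b b' : B}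
    (h1 : (a, b) ∈ f) (h2 : (a', b') ∈ f) (hle : b ≤ b') : a ≤ a' := by
  by_contra ha
  have hx : a ⊓ a'ᶜ ≠ ⊥ := by
    intro h
    exact ha (by rwa [← sdiff_eq, sdiff_eq_bot_iff] at h)
  obtain ⟨s, _, hs⟩ := exists_BACell Prod.fst f hx
  have hcell : BACell f Prod.fst s ≠ ⊥ := fun h => hs (by rw [h, inf_bot_eq])
  have hmem1 : (a, b) ∈ s := by
    by_contra hns
    have l1 : BACell f Prod.fst s ≤ aᶜ := BACell_le_of_not_mem h1 hns
    have : a ⊓ a'ᶜ ⊓ BACell f Prod.fst s ≤ a ⊓ aᶜ := inf_le_inf inf_le_left l1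
    exact hs (le_bot_iff.mp (by simpa using this))
  have hmem2 : (a', b') ∉ s := by
    intro hns
    have l1 : BACell f Prod.fst s ≤ a' := BACell_le_of_mem h2 hns
    have : a ⊓ a'ᶜ ⊓ BACell f Prod.fst s ≤ a'ᶜ ⊓ a' := inf_le_inf inf_le_right l1
    exact hs (le_bot_iff.mp (by simpa using this))
  have hB : BACell f Prod.snd s ≠ ⊥ := fun h => hcell ((hf s).mpr h)
  apply hB
  have l1 : BACell f Prod.snd s ≤ b := BACell_le_of_mem h1 hmem1
  have l2 : BACell f Prod.snd s ≤ b'ᶜ := BACell_le_of_not_mem h2 hmem2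
  have : BACell f Prod.snd s ≤ b' ⊓ b'ᶜ := le_inf (l1.trans hle) l2
  exact le_bot_iff.mp (by simpa using this)

open Classical in
/-- The piece of the `B`-cell corresponding to `a ⊓ (A-cell)`. -/
noncomputable def BAPick (f : Finset (A × B)) (a : A) (s : Finset (A × B)) : B :=
  if BACell f Prod.fst s ⊓ a = ⊥ then ⊥
  else if BACell f Prod.fst s ⊓ aᶜ = ⊥ then BACell f Prod.snd s
  else BASplit (BACell f Prod.snd s)

theorem BAPick_le (f : Finset (A × B)) (a : A) (s : Finset (A × B)) :
    BAPick f a s ≤ BACell f Prod.snd s := by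
  unfold BAPick
  split
  · exact bot_le
  split
  · exact le_rfl
  · exact BASplit_le _

/-- The candidate image of `a`. -/
noncomputable def BAExt (f : Finset (A × B)) (a : A) : B :=
  f.powerset.sup fun s => BAPick f a s

theorem BACell_inf_BAExt {f : Finset (A × B)} (a : A) {s : Finset (A × B)} (hs : s ⊆ f) :
    BACell f Prod.snd s ⊓ BAExt f a = BAPick f a s := by
  rw [BAExt, Finset.sup_inf_distrib_left]
  apply le_antisymm
  · apply Finset.sup_le
    intro t ht
    by_cases hts : t = s
    · subst hts
      exact inf_le_right
    · have hdisj : BACell f Prod.snd s ⊓ BACell f Prod.snd t = ⊥ :=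
        BACell_disjoint hs (Finset.mem_powerset.mp ht) (Ne.symm hts)
      have : BACell f Prod.snd s ⊓ BAPick f a t ≤
          BACell f Prod.snd s ⊓ BACell f Prod.snd t :=
        inf_le_inf le_rfl (BAPick_le f a t)
      rw [hdisj] at this
      exact this.trans bot_le
  · have hmem : s ∈ f.powerset := Finset.mem_powerset.mpr hs
    have : BACell f Prod.snd s ⊓ BAPick f a s ≤
        f.powerset.sup fun t => BACell f Prod.snd s ⊓ BAPick f a t :=
      Finset.le_sup (f := fun t => BACell f Prod.snd s ⊓ BAPick f a t) hmem
    rwa [inf_eq_right.mpr (BAPick_le f a s)] at this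

/-- Main extension lemma (left). -/
theorem BAGood.extend_left (hB : ∀ c : B, ¬IsAtom c) {f : Finset (A × B)} (hf : BAGood f)
    (a : A) : ∃ b : B, BAGood (insert (a, b) f) := by
  classical
  by_cases haf : ∃ b, (a, b) ∈ f
  · obtain ⟨b, hb⟩ := haf
    exact ⟨b, by rwa [Finset.insert_eq_self.mpr hb]⟩
  push_neg at haf
  set b := BAExt f a with hbdef
  have hpf : (a, b) ∉ f := haf b
  refine ⟨b, fun s => ?_⟩
  have hsf : s ∩ f ⊆ f := Finset.inter_subset_right
  obtain ⟨cA, hcA⟩ : ∃ c, BACell f Prod.fst (s ∩ f) = c := ⟨_, rfl⟩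
  obtain ⟨cB, hcB⟩ : ∃ c, BACell f Prod.snd (s ∩ f) = c := ⟨_, rfl⟩
  have hAeq : BACell f Prod.fst s = cA := BACell_inter.trans hcA
  have hBeq : BACell f Prod.snd s = cB := BACell_inter.trans hcB
  have hGood : cA = ⊥ ↔ cB = ⊥ := by rw [← hAeq, ← hBeq]; exact hf s
  have hbinf : cB ⊓ b = BAPick f a (s ∩ f) := by
    rw [← hcB]; exact BACell_inf_BAExt a hsf
  have hpick : BAPick f a (s ∩ f)
      = if cA ⊓ a = ⊥ then ⊥ else if cA ⊓ aᶜ = ⊥ then cB else BASplit cB := by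
    rw [BAPick, hcA, hcB]
  rw [hpick] at hbinf
  rw [BACell_insert hpf, BACell_insert hpf, hAeq, hBeq]
  by_cases hps : (a, b) ∈ s
  · rw [if_pos hps, if_pos hps]
    show a ⊓ cA = ⊥ ↔ b ⊓ cB = ⊥
    rw [inf_comm a cA, inf_comm b cB, hbinf]
    by_cases h1 : cA ⊓ a = ⊥
    · rw [if_pos h1]
      simp [h1]
    · rw [if_neg h1]
      have hcAne : cA ≠ ⊥ := fun h => h1 (by rw [h, bot_inf_eq])
      have hcBne : cB ≠ ⊥ := fun h => hcAne (hGood.mpr h)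
      by_cases h2 : cA ⊓ aᶜ = ⊥
      · rw [if_pos h2]
        exact iff_of_false h1 hcBne
      · rw [if_neg h2]
        exact iff_of_false h1 (BASplit_spec hB hcBne).1
  · rw [if_neg hps, if_neg hps]
    show aᶜ ⊓ cA = ⊥ ↔ bᶜ ⊓ cB = ⊥
    have hrhs : bᶜ ⊓ cB = ⊥ ↔ cB ≤ b := by
      rw [inf_comm, ← sdiff_eq, sdiff_eq_bot_iff]
    have hle : cB ≤ b ↔ cB
        = (if cA ⊓ a = ⊥ then ⊥ else if cA ⊓ aᶜ = ⊥ then cB else BASplit cB) := by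
      constructor
      · intro h
        rw [← hbinf, inf_eq_left.mpr h]
      · intro h
        conv_lhs => rw [h]
        rw [← hbinf]
        exact inf_le_right
    rw [hrhs, inf_comm aᶜ cA, hle]
    by_cases h1 : cA ⊓ a = ⊥
    · rw [if_pos h1]
      have hca : cA ⊓ aᶜ = cA :=
        inf_eq_left.mpr (disjoint_iff.mpr h1).le_compl_right
      rw [hca, hGood]
    · rw [if_neg h1]
      have hcAne : cA ≠ ⊥ := fun h => h1 (by rw [h, bot_inf_eq])
      have hcBne : cB ≠ ⊥ := fun h => hcAne (hGood.mpr h)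
      by_cases h2 : cA ⊓ aᶜ = ⊥
      · rw [if_pos h2]
        exact iff_of_true h2 rfl
      · rw [if_neg h2]
        refine iff_of_false h2 fun h => ?_
        have := (BASplit_spec hB hcBne).2
        rw [← h] at this
        exact lt_irrefl _ this

/-- Swapping a partial iso. -/
theorem BACell_image_swap {A B C : Type*} [DecidableEq (A × B)] [DecidableEq (B × A)]
    [BooleanAlgebra C] (f : Finset (A × B)) (g : A × B → C) (s : Finset (B × A)) :
    BACell (f.image Prod.swap) (fun q : B × A => g q.swap) s
      = BACell f g (s.image Prod.swap) := by
  rw [BACell, Finset.inf_image, BACell]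
  refine Finset.inf_congr rfl fun p hp => ?_
  have hmem : Prod.swap p ∈ s ↔ p ∈ s.image Prod.swap := by
    constructor
    · intro h
      exact Finset.mem_image.mpr ⟨_, h, Prod.swap_swap p⟩
    · intro h
      obtain ⟨q, hq, hqp⟩ := Finset.mem_image.mp h
      rwa [← hqp, Prod.swap_swap]
  by_cases h : Prod.swap p ∈ s
  · simp [Function.comp, h, hmem.mp h]
  · have h' : p ∉ s.image Prod.swap := fun h' => h (hmem.mpr h')
    simp [Function.comp, h, h']

/-- Swapping a partial iso. -/
theorem BAGood.swap [DecidableEq (B × A)] {f : Finset (A × B)} (hf : BAGood f) :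
    BAGood (f.image Prod.swap) := by
  intro s
  have h1 : BACell (f.image Prod.swap) Prod.fst s
      = BACell f Prod.snd (s.image Prod.swap) := BACell_image_swap f Prod.snd s
  have h2 : BACell (f.image Prod.swap) Prod.snd s
      = BACell f Prod.fst (s.image Prod.swap) := BACell_image_swap f Prod.fst s
  rw [h1, h2]
  exact (hf (s.image Prod.swap)).symm

/-- Main extension lemma (right). -/
theorem BAGood.extend_right [DecidableEq (B × A)] (hA : ∀ c : A, ¬IsAtom c)
    {f : Finset (A × B)} (hf : BAGood f)
    (b : B) : ∃ a : A, BAGood (insert (a, b) f) := by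
  obtain ⟨a, ha⟩ := BAGood.extend_left hA hf.swap b
  refine ⟨a, ?_⟩
  have := ha.swap
  rw [Finset.image_insert, Finset.image_image] at this
  have heq : (Prod.swap ∘ Prod.swap : A × B → A × B) = id := by
    funext p; simp
  rw [heq, Finset.image_id] at this
  simpa using this

end Good

theorem stmt_7 {A B : Type*} [BooleanAlgebra A] [BooleanAlgebra B]
    [Countable A] [Countable B] [Nontrivial A] [Nontrivial B]
    (hA : ∀ a : A, ¬ IsAtom a) (hB : ∀ b : B, ¬ IsAtom b) :
    ∃ e : A ≃ B,
      (∀ x y : A, e (x ⊓ y) = e x ⊓ e y) ∧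
      (∀ x y : A, e (x ⊔ y) = e x ⊔ e y) ∧
      (∀ x : A, e xᶜ = (e x)ᶜ) ∧
      e ⊤ = ⊤ ∧ e ⊥ = ⊥ := by
  letI : DecidableEq (A × B) := Classical.decEq _
  letI : DecidableEq (B × A) := Classical.decEq _
  obtain ⟨ea, hea⟩ := exists_surjective_nat A
  obtain ⟨eb, heb⟩ := exists_surjective_nat B
  -- build the chain of partial isomorphisms
  have step : ∀ p : {f : Finset (A × B) // BAGood f}, ∀ n : ℕ,
      ∃ q : {f : Finset (A × B) // BAGood f}, p.1 ⊆ q.1 ∧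
        (n % 2 = 0 → ∃ b, (ea (n / 2), b) ∈ q.1) ∧
        (n % 2 ≠ 0 → ∃ a, (a, eb (n / 2)) ∈ q.1) := by
    rintro ⟨f, hf⟩ n
    by_cases hn : n % 2 = 0
    · obtain ⟨b, hb⟩ := hf.extend_left hB (ea (n / 2))
      exact ⟨⟨_, hb⟩, Finset.subset_insert _ _,
        fun _ => ⟨b, Finset.mem_insert_self _ _⟩, fun h => absurd hn h⟩
    · obtain ⟨a, ha⟩ := hf.extend_right hA (eb (n / 2))
      exact ⟨⟨_, ha⟩, Finset.subset_insert _ _,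
        fun h => absurd h hn, fun _ => ⟨a, Finset.mem_insert_self _ _⟩⟩
  choose next hnext1 hnext2 hnext3 using step
  obtain ⟨G, hGsucc⟩ : ∃ G : ℕ → {f : Finset (A × B) // BAGood f},
      ∀ n, G (n + 1) = next (G n) n :=
    ⟨fun n => Nat.rec ⟨∅, BAGood_empty⟩ (fun n p => next p n) n, fun _ => rfl⟩
  have hGmono : ∀ m n, m ≤ n → (G m).1 ⊆ (G n).1 := by
    intro m n hmn
    induction n with
    | zero => rw [Nat.le_zero.mp hmn]
    | succ n ih =>
      rcases Nat.lt_or_ge m (n + 1) with h | h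
      · exact (ih (Nat.lt_succ_iff.mp h)).trans (by rw [hGsucc]; exact hnext1 _ _)
      · rw [Nat.le_antisymm hmn h]
  -- the limit relation
  set R : A → B → Prop := fun a b => ∃ n, (a, b) ∈ (G n).1 with hR
  have hcommon : ∀ {a b a' b'}, R a b → R a' b' →
      ∃ f : Finset (A × B), BAGood f ∧ (a, b) ∈ f ∧ (a', b') ∈ f := by
    rintro a b a' b' ⟨m, hm⟩ ⟨n, hn⟩
    exact ⟨(G (max m n)).1, (G (max m n)).2,
      hGmono m _ (le_max_left m n) hm, hGmono n _ (le_max_right m n) hn⟩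
  have hord : ∀ {a b a' b'}, R a b → R a' b' → (a ≤ a' ↔ b ≤ b') := by
    intro a b a' b' h1 h2
    obtain ⟨f, hf, hm1, hm2⟩ := hcommon h1 h2
    exact ⟨fun h => hf.le_snd hm1 hm2 h, fun h => hf.le_fst hm1 hm2 h⟩
  have htotL : ∀ a : A, ∃ b, R a b := by
    intro a
    obtain ⟨k, rfl⟩ := hea a
    have h : (2 * k) % 2 = 0 := by omega
    obtain ⟨b, hb⟩ := hnext2 (G (2 * k)) (2 * k) h
    refine ⟨b, 2 * k + 1, ?_⟩
    rw [hGsucc]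
    have : (2 * k) / 2 = k := by omega
    rwa [this] at hb
  have htotR : ∀ b : B, ∃ a, R a b := by
    intro b
    obtain ⟨k, rfl⟩ := heb b
    have h : (2 * k + 1) % 2 ≠ 0 := by omega
    obtain ⟨a, ha⟩ := hnext3 (G (2 * k + 1)) (2 * k + 1) h
    refine ⟨a, 2 * k + 2, ?_⟩
    have h22 : 2 * k + 2 = (2 * k + 1) + 1 := rfl
    rw [h22, hGsucc]
    have : (2 * k + 1) / 2 = k := by omega
    rwa [this] at ha
  -- functionality
  have hfunR : ∀ {a b b'}, R a b → R a b' → b = b' := by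
    intro a b b' h1 h2
    exact le_antisymm ((hord h1 h2).mp le_rfl) ((hord h2 h1).mp le_rfl)
  have hfunL : ∀ {a a' b}, R a b → R a' b → a = a' := by
    intro a a' b h1 h2
    exact le_antisymm ((hord h1 h2).mpr le_rfl) ((hord h2 h1).mpr le_rfl)
  choose F hF using htotL
  choose Finv hFinv using htotR
  let e : A ≃ B :=
    { toFun := F
      invFun := Finv
      left_inv := fun a => hfunL (hFinv (F a)) (hF a)
      right_inv := fun b => hfunR (hF (Finv b)) (hFinv b) }
  have heF : ∀ a, e a = F a := fun a => rfl
  have hRe : ∀ a, R a (e a) := fun a => by rw [heF]; exact hF a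
  have hmono : ∀ x y : A, x ≤ y ↔ e x ≤ e y := fun x y => hord (hRe x) (hRe y)
  have hsurj : Function.Surjective e := e.surjective
  -- prove operations preserved
  have hinf : ∀ x y : A, e (x ⊓ y) = e x ⊓ e y := by
    intro x y
    apply le_antisymm
    · exact le_inf ((hmono _ x).mp inf_le_left) ((hmono _ y).mp inf_le_right)
    · obtain ⟨z, hz⟩ := hsurj (e x ⊓ e y)
      have hzx : z ≤ x := (hmono z x).mpr (hz ▸ inf_le_left)
      have hzy : z ≤ y := (hmono z y).mpr (hz ▸ inf_le_right)
      rw [← hz]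
      exact (hmono z (x ⊓ y)).mp (le_inf hzx hzy)
  have hsup : ∀ x y : A, e (x ⊔ y) = e x ⊔ e y := by
    intro x y
    apply le_antisymm
    · obtain ⟨z, hz⟩ := hsurj (e x ⊔ e y)
      have hzx : x ≤ z := (hmono x z).mpr (hz ▸ le_sup_left)
      have hzy : y ≤ z := (hmono y z).mpr (hz ▸ le_sup_right)
      rw [← hz]
      exact (hmono (x ⊔ y) z).mp (sup_le hzx hzy)
    · exact sup_le ((hmono x _).mp le_sup_left) ((hmono y _).mp le_sup_right)
  have htop : e ⊤ = ⊤ := by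
    obtain ⟨z, hz⟩ := hsurj ⊤
    apply le_antisymm le_top
    rw [← hz]
    exact (hmono z ⊤).mp le_top
  have hbot : e ⊥ = ⊥ := by
    obtain ⟨z, hz⟩ := hsurj ⊥
    apply le_antisymm _ bot_le
    rw [← hz]
    exact (hmono ⊥ z).mp bot_le
  have hcompl : ∀ x : A, e xᶜ = (e x)ᶜ := by
    intro x
    have h1 : e x ⊓ e xᶜ = ⊥ := by rw [← hinf, inf_compl_eq_bot, hbot]
    have h2 : e x ⊔ e xᶜ = ⊤ := by rw [← hsup, sup_compl_eq_top, htop]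
    exact (compl_unique h1 h2).symm
  exact ⟨e, hinf, hsup, hcompl, htop, hbot⟩

end
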